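/- arXiv:2501.03234 — 3 statements merged into one kernel-verified Lean document; each statement's English description precedes it below -/
import Mathlib

section
/- If k is an odd prime, then S(k) ≥ -(k-1)/2 + k·H(k) - (k-1)(k+1)/4, where H(k) := ∑_{1≤j≤k-1, j odd} 1/j. -/
/-!
Swapping the two sums, `S(k) = ∑_j ∑_h (-1)^(j+1+⌊hj/k⌋)`. For even `j` the reflection
`h ↦ k - h` changes the parity of `⌊hj/k⌋` (since `k` is prime, `hj/k` is never an integer), so
these columns cancel. For odd `j` the column is an alternating sum over the fibres of
`h ↦ ⌊hj/k⌋`, which are intervals of `⌊k/j⌋` or `⌊k/j⌋ + 1` integers, so it is at least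
`⌊k/j⌋ - (j+1)/2`. Summing over the odd `j < k` gives `k H(k)` minus a quadratic in `k`.
-/

/-- `S(h,k) := ∑_{j=1}^{k-1} (-1)^{j+1+⌊hj/k⌋}` (here `h*j/k` is natural-number
division, which agrees with the floor of the rational `hj/k`). -/
def Spair (h k : ℕ) : ℤ := ∑ j ∈ Finset.Icc 1 (k - 1), (-1 : ℤ) ^ (j + 1 + h * j / k)

/-- `S(k) := ∑_{h=1}^{k-1} S(h,k)`. -/
def Ssum (k : ℕ) : ℤ := ∑ h ∈ Finset.Icc 1 (k - 1), Spair h k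

/-- `H(k) := ∑_{1 ≤ j ≤ k-1, j odd} 1/j`, a sum of real numbers. -/
noncomputable def H (k : ℕ) : ℝ :=
  ∑ j ∈ (Finset.Icc 1 (k - 1)).filter (fun j => Odd j), (1 : ℝ) / j

open Finset

lemma neg_one_pow_add_neg_one_pow_of_odd_add {a b : ℕ} (h : Odd (a + b)) :
    (-1 : ℤ) ^ a + (-1) ^ b = 0 := by
  rcases Nat.even_or_odd a with ha | ha
  · have hb : Odd b := (Nat.odd_add'.mp h).mpr ha
    rw [ha.neg_one_pow, hb.neg_one_pow]
    norm_num
  · have hb : Even b := Nat.odd_add.mp h |>.mp ha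
    rw [ha.neg_one_pow, hb.neg_one_pow]
    norm_num

lemma Nat.div_add_div_add_one_of_add_eq_mul {a b k j : ℕ} (hab : a + b = k * j)
    (ha : ¬ k ∣ a) : a / k + b / k + 1 = j := by
  have hk : 0 < k := Nat.pos_of_ne_zero (by rintro rfl; exact ha (by simp_all))
  have hmod : k ≤ a % k + b % k := by
    by_contra! hlt
    have : (a % k + b % k) % k = 0 := by rw [← Nat.add_mod, hab, Nat.mul_mod_right]
    rw [Nat.mod_eq_of_lt hlt] at this
    exact ha (Nat.dvd_of_mod_eq_zero (by omega))
  have := Nat.add_div (a := a) (b := b) hk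
  rw [hab, Nat.mul_div_cancel_left _ hk, if_pos hmod] at this
  omega

lemma filter_range_div_eq_Ico {k j m : ℕ} (hj : 0 < j) (hm : m < j) :
    {h ∈ range k | h * j / k = m} = Ico (m * k ⌈/⌉ j) ((m + 1) * k ⌈/⌉ j) := by
  ext h
  rcases Nat.eq_zero_or_pos k with rfl | hk
  · simp
  simp only [mem_filter, mem_range, mem_Ico, ceilDiv_le_iff_le_mul hj, ← not_le,
    Nat.div_eq_iff hk, mul_comm j h, add_mul, one_mul]
  have : (m + 1) * k ≤ j * k := Nat.mul_le_mul_right k hm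
  constructor
  · rintro ⟨-, h1, h2⟩
    omega
  · rintro ⟨h1, h2⟩
    refine ⟨?_, h1, by omega⟩
    by_contra! hkh
    have := Nat.mul_le_mul_right j hkh
    linarith

lemma card_filter_range_div_mem_Icc {k j m : ℕ} (hj : 0 < j) (hm : m < j) :
    #{h ∈ range k | h * j / k = m} ∈ Icc (k / j) (k / j + 1) := by
  rw [filter_range_div_eq_Ico hj hm, Nat.card_Ico, Nat.ceilDiv_eq_add_pred_div,
    Nat.ceilDiv_eq_add_pred_div, show (m + 1) * k + j - 1 = (m * k + j - 1) + k by
      rw [add_mul]; omega, Nat.add_div hj, mem_Icc]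
  generalize k / j = q
  split_ifs <;> omega

lemma le_sum_range_alternating {c : ℕ → ℤ} {q : ℤ} (t : ℕ)
    (hc : ∀ m ≤ 2 * t, q ≤ c m ∧ c m ≤ q + 1) :
    q - t ≤ ∑ m ∈ range (2 * t + 1), (-1) ^ m * c m := by
  induction t with
  | zero => simpa using (hc 0 le_rfl).1
  | succ t ih =>
    have hodd : (-1 : ℤ) ^ (2 * t + 1) = -1 := (odd_two_mul_add_one t).neg_one_pow
    have heven : (-1 : ℤ) ^ (2 * t + 1 + 1) = 1 := (even_two_mul (t + 1)).neg_one_pow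
    rw [show 2 * (t + 1) + 1 = 2 * t + 1 + 1 + 1 by ring, sum_range_succ, sum_range_succ,
      hodd, heven]
    have := ih fun m hm => hc m (by omega)
    have := (hc (2 * t + 1) (by omega)).2
    have := (hc (2 * t + 2) (by omega)).1
    push_cast
    linarith

lemma le_sum_range_neg_one_pow_div (k t : ℕ) :
    ((k / (2 * t + 1) : ℕ) : ℤ) - t ≤ ∑ h ∈ range k, (-1 : ℤ) ^ (h * (2 * t + 1) / k) := by
  have hmaps : ∀ h ∈ range k, h * (2 * t + 1) / k ∈ range (2 * t + 1) := by
    intro h hh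
    rw [mem_range] at hh ⊢
    rw [Nat.div_lt_iff_lt_mul (by omega), mul_comm]
    exact (Nat.mul_lt_mul_left (by omega)).2 hh
  have hfiber (m : ℕ) :
      ∑ h ∈ range k with h * (2 * t + 1) / k = m, (-1 : ℤ) ^ (h * (2 * t + 1) / k)
        = (-1) ^ m * #{h ∈ range k | h * (2 * t + 1) / k = m} := by
    rw [sum_congr rfl fun h hh => by rw [(mem_filter.mp hh).2], sum_const, nsmul_eq_mul,
      mul_comm]
  rw [← sum_fiberwise_of_maps_to hmaps]
  simp only [hfiber]
  refine le_sum_range_alternating t fun m hm => ?_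
  have := mem_Icc.mp (card_filter_range_div_mem_Icc (k := k) (by omega : 0 < 2 * t + 1)
    (by omega : m < 2 * t + 1))
  omega

lemma sum_Icc_neg_one_pow_div_eq_zero {k j : ℕ} (hk : k.Prime) (hodd : Odd k) (hj : Even j)
    (hkj : ¬ k ∣ j) : ∑ h ∈ Icc 1 (k - 1), (-1 : ℤ) ^ (j + 1 + h * j / k) = 0 := by
  refine sum_involution (fun h _ => k - h) (fun h hh => ?_) (fun h hh _ => ?_)
    (fun h hh => ?_) (fun h hh => ?_) <;> rw [mem_Icc] at hh
  · have hkh : ¬ k ∣ h * j := fun hdvd =>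
      (hk.dvd_mul.mp hdvd).elim (fun h' => by have := Nat.le_of_dvd (by omega) h'; omega) hkj
    have hsum : h * j / k + (k - h) * j / k + 1 = j :=
      Nat.div_add_div_add_one_of_add_eq_mul
        (by rw [← add_mul, Nat.add_sub_cancel' (by omega)]) hkh
    refine neg_one_pow_add_neg_one_pow_of_odd_add ?_
    rw [show j + 1 + h * j / k + (j + 1 + (k - h) * j / k) = 2 * (j + 1) + j - 1 by omega]
    obtain ⟨r, rfl⟩ := hj
    exact ⟨3 * r, by omega⟩
  · obtain ⟨r, rfl⟩ := hodd
    omega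
  · simp only [mem_Icc]
    omega
  · omega

lemma Ssum_eq_sum_columns (k : ℕ) :
    Ssum k = ∑ j ∈ Icc 1 (k - 1), ∑ h ∈ Icc 1 (k - 1), (-1 : ℤ) ^ (j + 1 + h * j / k) :=
  sum_comm

lemma sum_filter_odd_Icc {M : Type*} [AddCommMonoid M] (f : ℕ → M) (n : ℕ) :
    ∑ j ∈ Icc 1 (2 * n) with Odd j, f j = ∑ i ∈ range n, f (2 * i + 1) := by
  refine sum_nbij' (fun j => j / 2) (fun i => 2 * i + 1) ?_ ?_ ?_ ?_ ?_ <;>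
    simp only [mem_filter, mem_Icc, mem_range, Nat.odd_iff]
  · omega
  · omega
  · omega
  · omega
  · intro j hj
    rw [Nat.two_mul_div_two_add_one_of_odd (Nat.odd_iff.mpr hj.2)]

lemma sum_le_Ssum {n : ℕ} (hk : (2 * n + 1).Prime) :
    ∑ i ∈ range n, (((2 * n + 1) / (2 * i + 1) : ℕ) - (i + 1) : ℤ) ≤ Ssum (2 * n + 1) := by
  have heven : ∀ j ∈ {j ∈ Icc 1 (2 * n) | ¬ Odd j},
      ∑ h ∈ Icc 1 (2 * n), (-1 : ℤ) ^ (j + 1 + h * j / (2 * n + 1)) = 0 := by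
    intro j hj
    rw [mem_filter, mem_Icc, Nat.not_odd_iff_even] at hj
    exact sum_Icc_neg_one_pow_div_eq_zero hk (odd_two_mul_add_one n) hj.2
      (Nat.not_dvd_of_pos_of_lt hj.1.1 (by omega))
  rw [Ssum_eq_sum_columns, Nat.add_sub_cancel,
    ← sum_filter_add_sum_filter_not (Icc 1 (2 * n)) Odd, sum_eq_zero heven, add_zero,
    sum_filter_odd_Icc]
  refine sum_le_sum fun i _ => ?_
  have hcol := le_sum_range_neg_one_pow_div (2 * n + 1) i
  rw [sum_range_eq_add_Ico _ (by omega : 0 < 2 * n + 1), Ico_add_one_right_eq_Icc] at hcol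
  have hsign (h : ℕ) : (-1 : ℤ) ^ (2 * i + 1 + 1 + h) = (-1) ^ h := by
    rw [pow_add, Even.neg_one_pow ⟨i + 1, by ring⟩, one_mul]
  simp only [zero_mul, Nat.zero_div, pow_zero] at hcol
  simp only [hsign]
  linarith

lemma sub_one_le_cast_div {K : Type*} [Field K] [LinearOrder K] [IsStrictOrderedRing K]
    [FloorSemiring K] (a b : ℕ) : (a / b : K) - 1 ≤ ((a / b : ℕ) : K) := by
  rw [← Nat.floor_div_eq_div (K := K)]
  exact (Nat.sub_one_lt_floor _).le

theorem stmt_7 (k : ℕ) (hk : k.Prime) (hodd : Odd k) :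
    (Ssum k : ℝ) ≥ -((k : ℝ) - 1) / 2 + k * H k - ((k : ℝ) - 1) * ((k : ℝ) + 1) / 4 := by
  obtain ⟨n, rfl⟩ := hodd
  have hH : H (2 * n + 1) = ∑ i ∈ range n, 1 / (2 * i + 1 : ℝ) := by
    rw [H, Nat.add_sub_cancel, sum_filter_odd_Icc]
    push_cast
    rfl
  calc -((↑(2 * n + 1) : ℝ) - 1) / 2 + ↑(2 * n + 1) * H (2 * n + 1)
        - (↑(2 * n + 1) - 1) * (↑(2 * n + 1) + 1) / 4
      = ∑ i ∈ range n, ((2 * n + 1 : ℝ) / (2 * i + 1) - (n + 2)) := by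
        rw [hH, sum_sub_distrib, mul_sum, sum_const, card_range, nsmul_eq_mul]
        simp only [mul_one_div]
        push_cast
        ring
    _ ≤ ∑ i ∈ range n, ((((2 * n + 1) / (2 * i + 1) : ℕ) : ℝ) - (i + 1)) := by
        refine sum_le_sum fun i hi => ?_
        have hi : (i : ℝ) + 1 ≤ n := by exact_mod_cast mem_range.mp hi
        have := sub_one_le_cast_div (K := ℝ) (2 * n + 1) (2 * i + 1)
        push_cast at this
        linarith
    _ ≤ Ssum (2 * n + 1) := by exact_mod_cast sum_le_Ssum hk
end

section
/- If h and k are odd, coprime, positive integers, then S(h,k) = 0. -/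
theorem Nat.div_add_sub_div_add_one {m n k : ℕ} (hm : ¬k ∣ m) (hmn : m ≤ n * k) :
    m / k + (n * k - m) / k + 1 = n := by
  have hk : 0 < k := Nat.pos_of_ne_zero fun h => hm (h ▸ by simp_all)
  have hr : 0 < m % k := Nat.pos_of_ne_zero fun h => hm (Nat.dvd_of_mod_eq_zero h)
  have hq : m / k < n := by
    rw [Nat.div_lt_iff_lt_mul hk]
    exact lt_of_le_of_ne hmn fun h => hm (h ▸ dvd_mul_left k n)
  obtain ⟨t, hn⟩ := Nat.exists_eq_add_of_lt hq
  have hsplit : n * k - m = (k - m % k) + k * t := by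
    have hnk : n * k = k * (m / k) + k * t + k := by rw [hn]; ring
    have := Nat.div_add_mod m k
    have := Nat.mod_lt m hk
    omega
  rw [hsplit, Nat.add_mul_div_left _ _ hk, Nat.div_eq_of_lt (Nat.sub_lt hk hr)]
  omega

theorem Nat.Coprime.mul_div_add_mul_sub_div_add_one {h k j : ℕ} (hcop : h.Coprime k)
    (hj : 0 < j) (hjk : j < k) : h * j / k + h * (k - j) / k + 1 = h := by
  have hndvd : ¬k ∣ h * j := fun hdvd =>
    (Nat.le_of_dvd hj (hcop.symm.dvd_of_dvd_mul_left hdvd)).not_gt hjk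
  rw [Nat.mul_sub]
  exact Nat.div_add_sub_div_add_one hndvd (Nat.mul_le_mul_left h hjk.le)

theorem neg_one_pow_add_neg_one_pow_of_odd_add_s11 {R : Type*} [Ring R] {m n : ℕ}
    (h : Odd (m + n)) : (-1 : R) ^ m + (-1 : R) ^ n = 0 := by
  rcases Nat.even_or_odd m with hm | hm
  · rw [hm.neg_one_pow, (Nat.odd_add'.mp h |>.mpr hm).neg_one_pow, add_neg_cancel]
  · rw [hm.neg_one_pow, (Nat.odd_add.mp h |>.mp hm).neg_one_pow, neg_add_cancel]

theorem stmt_11_general (h k : ℕ) (hho : Odd h) (hko : Odd k)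
    (hcop : Nat.Coprime h k) : Spair h k = 0 := by
  obtain ⟨a, rfl⟩ := hho
  obtain ⟨b, rfl⟩ := hko
  refine Finset.sum_involution (fun j _ => 2 * b + 1 - j) (fun j hj => ?_) (fun j hj _ => ?_)
    (fun j hj => ?_) (fun j hj => ?_) <;> rw [Finset.mem_Icc] at hj
  · have hfloor := hcop.mul_div_add_mul_sub_div_add_one (j := j) (by omega) (by omega)
    exact neg_one_pow_add_neg_one_pow_of_odd_add_s11 ⟨a + b + 1, by omega⟩
  · omega
  · rw [Finset.mem_Icc]; omega
  · omega

theorem stmt_11 (h k : ℕ) (hh : 0 < h) (hk : 0 < k) (hho : Odd h) (hko : Odd k)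
    (hcop : Nat.Coprime h k) : Spair h k = 0 :=
  stmt_11_general h k hho hko hcop
end

section
/- If h and k are positive integers with k ≡ 2 (mod 4) and h ≡ 2 (mod 4), then T(h,k) = 1 - 2·gcd(h,k). -/
/-- `T(h,k) := ∑_{j=1}^{2k-1} (-1)^{j+1+⌊hj/k⌋}`. -/
def Tpair (h k : ℕ) : ℤ := ∑ j ∈ Finset.Icc 1 (2 * k - 1), (-1 : ℤ) ^ (j + 1 + h * j / k)

/-!
The terms with `k ∤ hj` cancel in pairs `j ↔ 2k - j`, because then
`⌊h(2k-j)/k⌋ = 2h - 1 - ⌊hj/k⌋` and the two exponents have odd sum. Writing `h = ad`, `k = md`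
with `d = gcd(h,k)`, the remaining indices are `j = mt` with `1 ≤ t ≤ 2d - 1`, whose exponent
`(a + m)t + 1` is odd as soon as `a` and `m` are odd. If `h ≡ k ≡ 2 (mod 4)` they are, since
`2 ∣ d` while `4` divides neither `h` nor `k`.
-/

open Finset

theorem neg_one_pow_add_neg_one_pow_of_odd {a b : ℕ} (hab : Odd (a + b)) :
    (-1 : ℤ) ^ a + (-1) ^ b = 0 := by
  rcases Nat.even_or_odd a with ha | ha
  · rw [ha.neg_one_pow, ((Nat.odd_add'.mp hab).mpr ha).neg_one_pow]; norm_num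
  · rw [ha.neg_one_pow, ((Nat.odd_add.mp hab).mp ha).neg_one_pow]; norm_num

theorem Nat.sub_div_add_div_add_one_of_not_dvd {n k c : ℕ} (hn : ¬ k ∣ n) (hnc : n ≤ c * k) :
    (c * k - n) / k + n / k + 1 = c := by
  have hr0 : n % k ≠ 0 := fun h => hn (Nat.dvd_of_mod_eq_zero h)
  have hk : 0 < k := Nat.pos_of_ne_zero (by rintro rfl; simp_all)
  have hrk : n % k < k := Nat.mod_lt _ hk
  have hqr := Nat.div_add_mod n k
  set q := n / k
  set r := n % k
  obtain ⟨e, rfl⟩ : ∃ e, c = q + 1 + e := by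
    have : k * q < k * c := by rw [mul_comm k c]; omega
    exact ⟨c - (q + 1), by have := Nat.lt_of_mul_lt_mul_left this; omega⟩
  have : (q + 1 + e) * k - n = (k - r) + k * e := by
    rw [add_mul, add_mul, one_mul, mul_comm e, mul_comm q]; omega
  rw [this, Nat.add_mul_div_left _ _ hk, Nat.div_eq_of_lt (by omega)]
  ring

theorem sum_filter_not_dvd_neg_one_pow_eq_zero (h : ℕ) {k : ℕ} (hk : 0 < k) :
    ∑ j ∈ (Icc 1 (2 * k - 1)).filter (fun j => ¬ k ∣ h * j),
      (-1 : ℤ) ^ (j + 1 + h * j / k) = 0 := by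
  have reflect : ∀ j ≤ 2 * k, h * (2 * k - j) + h * j = 2 * h * k := fun j hj => by
    rw [← mul_add, Nat.sub_add_cancel hj]; ring
  refine sum_involution (fun j _ => 2 * k - j) ?pair ?ne_self ?mem ?invol
  case pair =>
    intro j hj
    simp only [mem_filter, mem_Icc] at hj
    obtain ⟨⟨-, hj2⟩, hndvd⟩ := hj
    have hfloor := Nat.sub_div_add_div_add_one_of_not_dvd hndvd
      (le_of_le_of_eq (Nat.le_add_left _ _) (reflect j (by omega)))
    rw [← reflect j (by omega), Nat.add_sub_cancel] at hfloor
    exact neg_one_pow_add_neg_one_pow_of_odd ⟨k + h, by omega⟩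
  case ne_self =>
    intro j hj _ hfix
    simp only [mem_filter] at hj
    exact hj.2 ⟨h, by rw [show j = k by omega, mul_comm]⟩
  case mem =>
    intro j hj
    simp only [mem_filter, mem_Icc] at hj ⊢
    obtain ⟨⟨hj1, hj2⟩, hndvd⟩ := hj
    refine ⟨⟨by omega, by omega⟩, fun hdvd => hndvd ?_⟩
    rw [← Nat.dvd_add_right hdvd, reflect j (by omega)]
    exact Dvd.intro_left _ rfl
  case invol =>
    intro j hj
    simp only [mem_filter, mem_Icc] at hj
    omega

theorem filter_dvd_mul_eq_image {a m d : ℕ} (hd : 0 < d) (hm : 0 < m) (hcop : a.Coprime m) :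
    (Icc 1 (2 * (m * d) - 1)).filter (fun j => m * d ∣ a * d * j)
      = (Icc 1 (2 * d - 1)).image (m * ·) := by
  ext j
  have hdvd : m * d ∣ a * d * j ↔ m ∣ j := by
    rw [mul_right_comm, Nat.mul_dvd_mul_iff_right hd, hcop.symm.dvd_mul_left]
  simp only [mem_filter, mem_Icc, mem_image, hdvd]
  constructor
  · rintro ⟨⟨hj1, hj2⟩, t, rfl⟩
    refine ⟨t, ⟨Nat.pos_of_ne_zero (by rintro rfl; simp at hj1), ?_⟩, rfl⟩
    have : m * t < m * (2 * d) := by rw [mul_left_comm]; omega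
    have := Nat.lt_of_mul_lt_mul_left this
    omega
  · rintro ⟨t, ⟨ht1, ht2⟩, rfl⟩
    refine ⟨⟨Nat.mul_pos hm ht1, ?_⟩, dvd_mul_right m t⟩
    have : m * t < m * (2 * d) := Nat.mul_lt_mul_of_pos_left (by omega) hm
    rw [mul_left_comm] at this
    omega

theorem Tpair_mul_of_odd {a m d : ℕ} (hd : 0 < d) (ha : Odd a) (hm : Odd m) (hcop : a.Coprime m) :
    Tpair (a * d) (m * d) = 1 - 2 * d := by
  have hmd : 0 < m * d := Nat.mul_pos hm.pos hd
  rw [Tpair, ← sum_filter_add_sum_filter_not _ (fun j => m * d ∣ a * d * j),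
    sum_filter_not_dvd_neg_one_pow_eq_zero _ hmd, add_zero,
    filter_dvd_mul_eq_image hd hm.pos hcop,
    sum_image fun _ _ _ _ => Nat.eq_of_mul_eq_mul_left hm.pos]
  have hterm : ∀ t, (-1 : ℤ) ^ (m * t + 1 + a * d * (m * t) / (m * d)) = -1 := fun t => by
    have hquot : a * d * (m * t) / (m * d) = a * t := by
      rw [show a * d * (m * t) = a * t * (m * d) by ring, Nat.mul_div_cancel _ hmd]
    rw [hquot, show m * t + 1 + a * t = (m + a) * t + 1 by ring]
    exact ((hm.add_odd ha).mul_right t).add_one.neg_one_pow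
  simp only [hterm, sum_const, Nat.card_Icc, Nat.add_sub_cancel, nsmul_eq_mul]
  rw [Nat.cast_sub (by omega)]
  push_cast
  ring

theorem Nat.odd_of_mul_mod_four_eq_two {a d : ℕ} (hd : 2 ∣ d) (h : a * d % 4 = 2) : Odd a := by
  by_contra ha
  obtain ⟨b, rfl⟩ := Nat.not_odd_iff_even.mp ha
  obtain ⟨e, rfl⟩ := hd
  rw [show (b + b) * (2 * e) = 4 * (b * e) by ring] at h
  omega

theorem stmt_19_general (h k : ℕ) (hk4 : k % 4 = 2) (hh4 : h % 4 = 2) :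
    Tpair h k = 1 - 2 * (Nat.gcd h k : ℤ) := by
  obtain ⟨a, m, hcop, hha, hkm⟩ := Nat.exists_coprime h k
  have h2d : 2 ∣ Nat.gcd h k := Nat.dvd_gcd (by omega) (by omega)
  have hd : 0 < Nat.gcd h k := Nat.gcd_pos_of_pos_left _ (by omega)
  have ha : Odd a := Nat.odd_of_mul_mod_four_eq_two h2d (hha ▸ hh4)
  have hm : Odd m := Nat.odd_of_mul_mod_four_eq_two h2d (hkm ▸ hk4)
  calc Tpair h k = Tpair (a * Nat.gcd h k) (m * Nat.gcd h k) := by rw [← hha, ← hkm]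
    _ = 1 - 2 * (Nat.gcd h k : ℤ) := Tpair_mul_of_odd hd ha hm hcop

theorem stmt_19 (h k : ℕ) (hh : 0 < h) (hk : 0 < k) (hk4 : k % 4 = 2) (hh4 : h % 4 = 2) :
    Tpair h k = 1 - 2 * (Nat.gcd h k : ℤ) :=
  stmt_19_general h k hk4 hh4
end
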